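/- For probability distributions P, Q on a finite set of size N = q^n with Q(x) > 0 for all x, and integer p ≥ 2: if the p-variational distance satisfies V_p(P, Q) ≤ δ with Q uniform, then the Rényi divergence satisfies D_p(P || Q) ≤ (p/(p−1)) · log_q(1 + δ). -/
import Mathlib


/-- If the `p`-variational distance of `P` from the uniform distribution `u` on a set
of size `N = q^n` is at most `δ`, then the order-`p` Rényi divergence (base `q`)
satisfies `D_p(P||u) ≤ (p/(p−1)) log_q(1+δ)`. -/
theorem stmt_16 (q n : ℕ) (hq : 2 ≤ q) (α : Type) [Fintype α]
    (hcard : Fintype.card α = q ^ n)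
    (P : α → ℝ) (hP0 : ∀ x, 0 ≤ P x) (hP1 : ∑ x, P x = 1)
    (p : ℕ) (hp : 2 ≤ p) (δ : ℝ) :
    let u : α → ℝ := fun _ => ((q : ℝ) ^ n)⁻¹
    ((q ^ n : ℝ) * (((q ^ n : ℝ))⁻¹ * ∑ x, |P x - u x| ^ p) ^ ((1 : ℝ) / p) ≤ δ) →
    (1 / ((p : ℝ) - 1)) * Real.logb q (∑ x, P x ^ p / u x ^ (p - 1)) ≤
      ((p : ℝ) / ((p : ℝ) - 1)) * Real.logb q (1 + δ) := by
  intro u h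
  set N : ℝ := (q : ℝ) ^ n with hNdef
  have hq1 : (1 : ℝ) < (q : ℝ) := by exact_mod_cast hq.trans_lt' one_lt_two
  have hN1 : (1 : ℝ) ≤ N := one_le_pow₀ hq1.le
  have hN : (0 : ℝ) < N := lt_of_lt_of_le one_pos hN1
  have hp1 : (1 : ℝ) ≤ (p : ℝ) := by exact_mod_cast (le_trans one_le_two hp)
  have hppos : (0 : ℝ) < (p : ℝ) := lt_of_lt_of_le one_pos hp1
  have hpm1 : (0 : ℝ) < (p : ℝ) - 1 := by
    have : (2 : ℝ) ≤ (p : ℝ) := by exact_mod_cast hp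
    linarith
  set S : ℝ := ∑ x, |P x - u x| ^ p with hSdef
  have hS0 : 0 ≤ S := Finset.sum_nonneg fun x _ => pow_nonneg (abs_nonneg _) _
  set T : ℝ := ∑ x, P x ^ p with hTdef
  have hT0 : 0 ≤ T := Finset.sum_nonneg fun x _ => pow_nonneg (hP0 x) _
  -- δ is nonnegative
  have hδ0 : 0 ≤ δ := by
    refine le_trans ?_ h
    positivity
  -- From the hypothesis: S ^ (1/p) ≤ δ * N ^ (1/p - 1)
  have hSbound : S ^ ((1 : ℝ) / p) ≤ δ * N ^ ((1 : ℝ) / p - 1) := by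
    have hsplit : (N⁻¹ * S) ^ ((1 : ℝ) / p)
        = N ^ (-((1 : ℝ) / p)) * S ^ ((1 : ℝ) / p) := by
      rw [Real.mul_rpow (by positivity) hS0, Real.inv_rpow hN.le,
        ← Real.rpow_neg hN.le]
    have h' : N * (N ^ (-((1 : ℝ) / p)) * S ^ ((1 : ℝ) / p)) ≤ δ := by
      rw [← hsplit]; exact h
    have hNne : N ^ ((1 : ℝ) / p - 1) * N ^ (1 - (1 : ℝ) / p) = 1 := by
      rw [← Real.rpow_add hN]; norm_num
    have hNmul : N * N ^ (-((1 : ℝ) / p)) = N ^ (1 - (1 : ℝ) / p) := by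
      nth_rewrite 1 [← Real.rpow_one N]
      rw [← Real.rpow_add hN]; congr 1
    calc S ^ ((1 : ℝ) / p)
        = (N ^ ((1 : ℝ) / p - 1) * N ^ (1 - (1 : ℝ) / p)) * S ^ ((1 : ℝ) / p) := by
          rw [hNne, one_mul]
      _ = N ^ ((1 : ℝ) / p - 1) * (N * (N ^ (-((1 : ℝ) / p)) * S ^ ((1 : ℝ) / p))) := by
          rw [← hNmul]; ring
      _ ≤ N ^ ((1 : ℝ) / p - 1) * δ := by
          exact mul_le_mul_of_nonneg_left h' (by positivity)
      _ = δ * N ^ ((1 : ℝ) / p - 1) := mul_comm _ _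
  -- Minkowski: T ^ (1/p) ≤ (∑ u^p)^(1/p) + S^(1/p)
  have hsum_u : ∑ x : α, (u x) ^ (p : ℕ) = N ^ (1 - (p : ℝ)) := by
    have hNp : ((N)⁻¹) ^ (p : ℕ) = N ^ (-(p : ℝ)) := by
      rw [inv_pow, ← Real.rpow_natCast N p, ← Real.rpow_neg hN.le]
    show ∑ _x : α, ((N)⁻¹) ^ (p : ℕ) = N ^ (1 - (p : ℝ))
    rw [Finset.sum_const, Finset.card_univ, hcard, nsmul_eq_mul, hNp]
    have hcast : ((q ^ n : ℕ) : ℝ) = N := by push_cast [hNdef]; ring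
    rw [hcast]
    nth_rewrite 1 [← Real.rpow_one N]
    rw [← Real.rpow_add hN]
    congr 1
  have hMink : T ^ ((1 : ℝ) / p) ≤ (N ^ ((1 : ℝ) - p)) ^ ((1 : ℝ) / p) + S ^ ((1 : ℝ) / p) := by
    have step1 : T ≤ ∑ x, (u x + |P x - u x|) ^ p := by
      refine Finset.sum_le_sum fun x _ => ?_
      refine pow_le_pow_left₀ (hP0 x) ?_ p
      have := abs_nonneg (P x - u x)
      have := le_abs_self (P x - u x)
      linarith
    have step2 : (∑ x, (u x + |P x - u x|) ^ p) ^ ((1 : ℝ) / p)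
        ≤ (∑ x, (u x) ^ p) ^ ((1 : ℝ) / p) + (∑ x, |P x - u x| ^ p) ^ ((1 : ℝ) / p) := by
      have := Real.Lp_add_le_of_nonneg (s := Finset.univ) (f := u)
        (g := fun x => |P x - u x|) (p := (p : ℝ)) hp1
        (fun i _ => by positivity) (fun i _ => abs_nonneg _)
      simpa [Real.rpow_natCast] using this
    calc T ^ ((1 : ℝ) / p) ≤ (∑ x, (u x + |P x - u x|) ^ p) ^ ((1 : ℝ) / p) :=
          Real.rpow_le_rpow hT0 step1 (by positivity)
      _ ≤ (∑ x, (u x) ^ p) ^ ((1 : ℝ) / p) + S ^ ((1 : ℝ) / p) := step2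
      _ = (N ^ ((1 : ℝ) - p)) ^ ((1 : ℝ) / p) + S ^ ((1 : ℝ) / p) := by rw [hsum_u]
  -- combine
  have hNpow : (N ^ ((1 : ℝ) - p)) ^ ((1 : ℝ) / p) = N ^ ((1 : ℝ) / p - 1) := by
    rw [← Real.rpow_mul hN.le]
    congr 1
    field_simp
  have hcomb : T ^ ((1 : ℝ) / p) ≤ (1 + δ) * N ^ ((1 : ℝ) / p - 1) := by
    calc T ^ ((1 : ℝ) / p) ≤ N ^ ((1 : ℝ) / p - 1) + S ^ ((1 : ℝ) / p) := by
          rw [← hNpow]; exact hMink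
      _ ≤ N ^ ((1 : ℝ) / p - 1) + δ * N ^ ((1 : ℝ) / p - 1) := by linarith [hSbound]
      _ = (1 + δ) * N ^ ((1 : ℝ) / p - 1) := by ring
  -- raise to the p
  have hkey : N ^ ((p : ℝ) - 1) * T ≤ (1 + δ) ^ (p : ℕ) := by
    have hup : (T ^ ((1 : ℝ) / p)) ^ (p : ℝ) ≤ ((1 + δ) * N ^ ((1 : ℝ) / p - 1)) ^ (p : ℝ) :=
      Real.rpow_le_rpow (by positivity) hcomb hppos.le
    have hleft : (T ^ ((1 : ℝ) / p)) ^ (p : ℝ) = T := by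
      rw [← Real.rpow_mul hT0, one_div_mul_cancel (ne_of_gt hppos), Real.rpow_one]
    have hright : ((1 + δ) * N ^ ((1 : ℝ) / p - 1)) ^ (p : ℝ)
        = (1 + δ) ^ (p : ℕ) * N ^ ((1 : ℝ) - p) := by
      rw [Real.mul_rpow (by positivity) (by positivity), ← Real.rpow_mul hN.le,
        Real.rpow_natCast]
      congr 1
      field_simp
    rw [hleft, hright] at hup
    have hNcancel : N ^ ((p : ℝ) - 1) * N ^ ((1 : ℝ) - p) = 1 := by
      rw [← Real.rpow_add hN]; norm_num
    calc N ^ ((p : ℝ) - 1) * T ≤ N ^ ((p : ℝ) - 1) * ((1 + δ) ^ (p : ℕ) * N ^ ((1 : ℝ) - p)) :=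
          mul_le_mul_of_nonneg_left hup (by positivity)
      _ = (1 + δ) ^ (p : ℕ) * (N ^ ((p : ℝ) - 1) * N ^ ((1 : ℝ) - p)) := by ring
      _ = (1 + δ) ^ (p : ℕ) := by rw [hNcancel, mul_one]
  -- rewrite the divergence sum
  have hdiv : ∑ x, P x ^ p / u x ^ (p - 1) = N ^ ((p : ℝ) - 1) * T := by
    have hNp : ((N)⁻¹ : ℝ) ^ (p - 1 : ℕ) = N ^ ((1 : ℝ) - p) := by
      rw [inv_pow, ← Real.rpow_natCast N (p - 1), ← Real.rpow_neg hN.le]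
      congr 1
      have : ((p - 1 : ℕ) : ℝ) = (p : ℝ) - 1 := by
        have h1p : 1 ≤ p := le_trans one_le_two hp
        push_cast [Nat.cast_sub h1p]
        ring
      rw [this]; ring
    have : ∀ x : α, P x ^ p / u x ^ (p - 1) = N ^ ((p:ℝ) - 1) * P x ^ p := by
      intro x
      show P x ^ p / ((N)⁻¹) ^ (p - 1) = N ^ ((p:ℝ) - 1) * P x ^ p
      rw [hNp, div_eq_iff (by positivity)]
      rw [mul_assoc, mul_comm (P x ^ p), ← mul_assoc, ← Real.rpow_add hN]
      norm_num
    rw [Finset.sum_congr rfl (fun x _ => this x), ← Finset.mul_sum]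
  -- positivity of T
  have hTpos : 0 < T := by
    obtain ⟨x, hx⟩ : ∃ x : α, 0 < P x := by
      by_contra hc
      push_neg at hc
      have : ∀ x : α, P x = 0 := fun x => le_antisymm (hc x) (hP0 x)
      simp [this] at hP1
    have : 0 < P x ^ p := pow_pos hx p
    refine lt_of_lt_of_le this ?_
    exact Finset.single_le_sum (fun i _ => pow_nonneg (hP0 i) p) (Finset.mem_univ x)
  -- conclude with logb
  rw [hdiv]
  have hlog : Real.logb q (N ^ ((p : ℝ) - 1) * T) ≤ Real.logb q ((1 + δ) ^ (p : ℕ)) :=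
    Real.logb_le_logb_of_le hq1 (by positivity) hkey
  rw [Real.logb_pow] at hlog
  have h1 : (1 / ((p : ℝ) - 1)) * Real.logb q (N ^ ((p : ℝ) - 1) * T)
      ≤ (1 / ((p : ℝ) - 1)) * ((p : ℝ) * Real.logb q (1 + δ)) :=
    mul_le_mul_of_nonneg_left hlog (by positivity)
  calc (1 / ((p : ℝ) - 1)) * Real.logb q (N ^ ((p : ℝ) - 1) * T)
      ≤ (1 / ((p : ℝ) - 1)) * ((p : ℝ) * Real.logb q (1 + δ)) := h1
    _ = ((p : ℝ) / ((p : ℝ) - 1)) * Real.logb q (1 + δ) := by ring
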